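/- Let t be a regular operator between Hilbert C*-modules E and F. Then t has closed range if and only if Ker(t) is orthogonally complemented in E and t is bounded below on Ker(t)^⊥ ∩ Dom(t), i.e. there is c > 0 with ‖tx‖ ≥ c‖x‖ for all x ∈ Ker(t)^⊥ ∩ Dom(t). -/

import Mathlib

/- Framework: Hilbert C*-modules over a C*-algebra `A` (via Mathlib's `CStarModule`),
densely defined operators as `LinearPMap`s, `A`-valued orthogonality, adjoints,
regularity, graphs inside `E ⊕ F`. -/

open scoped InnerProductSpace RightActions WithCStarModule

namespace RegularOperators

variable (A : Type*) [NonUnitalCStarAlgebra A] [PartialOrder A] [StarOrderedRing A]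

section Defs

variable {E F : Type*}
  [NormedAddCommGroup E] [Module ℂ E] [SMul A E] [CStarModule A E]
  [NormedAddCommGroup F] [Module ℂ F] [SMul A F] [CStarModule A F]

/-- Orthogonal complement of a subset w.r.t. the `A`-valued inner product. -/
def ortho (S : Set E) : Set E := {y | ∀ u ∈ S, ⟪u, y⟫_A = 0}

/-- `S` is orthogonally complemented (an orthogonal summand): every element of `E`
decomposes as a sum of an element of `S` and an element of `S^⊥`. -/
def OrthoComplemented (S : Set E) : Prop := ∀ z : E, ∃ u ∈ S, ∃ v ∈ ortho A S, z = u + v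

/-- A partially defined operator is `A`-linear (for the right `A`-module action). -/
def AModuleMap (t : E →ₗ.[ℂ] F) : Prop :=
  ∀ (a : A) (x : t.domain), ∃ hx : a • (x : E) ∈ t.domain, t ⟨a • (x : E), hx⟩ = a • (t x)

/-- Kernel of a partially defined operator, as a subset of `E`. -/
def kerSet (t : E →ₗ.[ℂ] F) : Set E := {x | ∃ hx : x ∈ t.domain, t ⟨x, hx⟩ = 0}

/-- Range of a partially defined operator. -/
def ranSet (t : E →ₗ.[ℂ] F) : Set F := {y | ∃ x : t.domain, t x = y}

/-- Domain of the adjoint: those `y` for which some `z` satisfies `⟪tx, y⟫ = ⟪x, z⟫`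
for all `x` in the domain of `t`. -/
def adjDomain (t : E →ₗ.[ℂ] F) : Set F :=
  {y | ∃ z : E, ∀ x : t.domain, ⟪t x, y⟫_A = ⟪(x : E), z⟫_A}

/-- `s` is the adjoint operator `t*` of `t`. -/
structure IsAdjoint (t : E →ₗ.[ℂ] F) (s : F →ₗ.[ℂ] E) : Prop where
  dom : (s.domain : Set F) = adjDomain A t
  inner_eq : ∀ (x : t.domain) (y : s.domain), ⟪t x, (y : F)⟫_A = ⟪(x : E), s y⟫_A

/-- The range of `1 + t*t` (where `s` plays the role of `t*`). -/
def onePlusRange (t : E →ₗ.[ℂ] F) (s : F →ₗ.[ℂ] E) : Set E :=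
  {u | ∃ (x : t.domain) (h : t x ∈ s.domain), (x : E) + s ⟨t x, h⟩ = u}

/-- `t` is a regular operator with adjoint `s`: it is `A`-linear, densely defined,
closed, adjointable with densely defined adjoint, and `1 + t*t` has dense range. -/
structure IsRegular (t : E →ₗ.[ℂ] F) (s : F →ₗ.[ℂ] E) : Prop where
  amod : AModuleMap A t
  denseDom : Dense (t.domain : Set E)
  closedGraph : IsClosed (t.graph : Set (E × F))
  adj : IsAdjoint A t s
  denseAdjDom : Dense (s.domain : Set F)
  denseOnePlusRange : Dense (onePlusRange t s)

/-- The graph of `t` inside the Hilbert `A`-module `E ⊕ F`. -/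
def graphSet (t : E →ₗ.[ℂ] F) : Set (C⋆ᵐᵒᵈ(A, E × F)) :=
  {w | ∃ x : t.domain, WithCStarModule.equiv A (E × F) w = ((x : E), t x)}

/-- The range of `P_F ∘ P_{G(t)^⊥}`, i.e. the image of `G(t)^⊥ ⊆ E ⊕ F` under the
canonical projection onto `F`. -/
def pfRange (t : E →ₗ.[ℂ] F) : Set F :=
  {y | ∃ w ∈ ortho A (graphSet A t), (WithCStarModule.equiv A (E × F) w).2 = y}

end Defs

end RegularOperators

open RegularOperators
variable {A : Type*} [NonUnitalCStarAlgebra A] [PartialOrder A] [StarOrderedRing A]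
variable {E F : Type*}
  [NormedAddCommGroup E] [Module ℂ E] [SMul A E] [CStarModule A E] [CompleteSpace E]
  [NormedAddCommGroup F] [Module ℂ F] [SMul A F] [CStarModule A F] [CompleteSpace F]

/-!
Backward direction: on the closed set of graph points `(x, t x)` with `x ⊥ Ker t` the projection
to `F` is antilipschitz, so its image is closed; as `Ker t` is complemented, that image is
`Ran t`.

Forward direction: the open mapping theorem on the graph of `t` gives preimages with
`‖x‖ ≤ C ‖t x‖`, and Pythagoras turns this into the lower bound on `Ker(t)^⊥`. For the complement,
regularity makes `1 + t*t` surjective (its range is dense and, being bounded below on the closed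
set of triples `(u, t u, t*t u)`, closed), and a contraction argument then solves
`u + μ t*t u = z` for every `μ ≥ 1`. Such a `u` has `z - u ∈ Ran t* ⊆ Ker(t)^⊥` and
`μ ‖t u‖² ≤ ‖z‖²`; letting `μ → ∞`, the lower bound makes `u` converge, to some `k ∈ Ker t` with
`z - k ⊥ Ker t`.
-/

namespace RegularOperators

open Filter Topology

theorem isClosed_image_of_le_mul_dist {X Y : Type*} [MetricSpace X] [CompleteSpace X]
    [MetricSpace Y] {P : Set X} (hP : IsClosed P) {f : X → Y} (hf : UniformContinuous f)
    {K : ℝ} (hK : ∀ p ∈ P, ∀ q ∈ P, dist p q ≤ K * dist (f p) (f q)) :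
    IsClosed (f '' P) := by
  have : CompleteSpace P := hP.isComplete.completeSpace_coe
  have hanti : AntilipschitzWith K.toNNReal (P.domRestrict f) :=
    AntilipschitzWith.of_le_mul_dist fun p q =>
      (hK p p.2 q q.2).trans (mul_le_mul_of_nonneg_right (Real.le_coe_toNNReal K) dist_nonneg)
  rw [← Set.range_domRestrict]
  exact hanti.isClosed_range (hf.comp uniformContinuous_subtype_val)

section Graph

variable {E F : Type*} [NormedAddCommGroup E] [Module ℂ E] [NormedAddCommGroup F] [Module ℂ F]

theorem mem_kerSet_iff_mem_graph (t : E →ₗ.[ℂ] F) {x : E} :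
    x ∈ kerSet t ↔ (x, 0) ∈ t.graph := by
  rw [LinearPMap.mem_graph_iff]
  constructor
  · rintro ⟨hx, h⟩
    exact ⟨⟨x, hx⟩, rfl, h⟩
  · rintro ⟨y, rfl, h⟩
    exact ⟨y.2, h⟩

theorem mul_norm_le_of_mem_graph {t : E →ₗ.[ℂ] F} {S : Set E} {c : ℝ}
    (h : ∀ x : t.domain, (x : E) ∈ S → c * ‖(x : E)‖ ≤ ‖t x‖) {x : E} {y : F}
    (hxy : (x, y) ∈ t.graph) (hx : x ∈ S) : c * ‖x‖ ≤ ‖y‖ := by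
  obtain ⟨x', rfl, rfl⟩ := t.mem_graph_iff.1 hxy
  exact h x' hx

end Graph

section Banach

variable {E F : Type*} [NormedAddCommGroup E] [NormedSpace ℂ E] [CompleteSpace E]
  [NormedAddCommGroup F] [NormedSpace ℂ F] [CompleteSpace F]

theorem exists_preimage_norm_le_of_isClosed_ranSet (t : E →ₗ.[ℂ] F)
    (hg : IsClosed (t.graph : Set (E × F))) (hr : IsClosed (ranSet t)) :
    ∃ C > 0, ∀ y ∈ ranSet t, ∃ x : t.domain, t x = y ∧ ‖(x : E)‖ ≤ C * ‖y‖ := by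
  have : CompleteSpace t.graph := hg.isComplete.completeSpace_coe
  let f : t.graph →L[ℂ] F := (ContinuousLinearMap.snd ℂ E F).comp t.graph.subtypeL
  have hf : (f.range : Set F) = ranSet t := by
    ext y
    simp [f, ranSet, LinearPMap.mem_graph_iff]
  have : CompleteSpace f.range := (hf ▸ hr).isComplete.completeSpace_coe
  obtain ⟨C, hC, hpre⟩ :=
    f.rangeRestrict.exists_preimage_norm_le (LinearMap.surjective_rangeRestrict _)
  refine ⟨C, hC, fun y hy => ?_⟩
  obtain ⟨⟨p, hp⟩, hfp, hpC⟩ := hpre ⟨y, by rwa [← SetLike.mem_coe, hf]⟩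
  obtain ⟨x, hx, htx⟩ := (LinearPMap.mem_graph_iff t).1 hp
  exact ⟨x, htx.trans (congrArg Subtype.val hfp), hx ▸ (norm_fst_le p).trans hpC⟩

end Banach

section Orthogonality

variable {A : Type*} [NonUnitalCStarAlgebra A] [PartialOrder A]
  {E : Type*} [NormedAddCommGroup E] [NormedSpace ℂ E] [SMul A E] [CStarModule A E]

theorem sub_mem_ortho {S : Set E} {x y : E} (hx : x ∈ ortho A S) (hy : y ∈ ortho A S) :
    x - y ∈ ortho A S := fun u hu => by
  rw [CStarModule.inner_sub_right, hx u hu, hy u hu, sub_self]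

theorem smul_mem_ortho {S : Set E} (μ : ℝ) {x : E} (hx : x ∈ ortho A S) :
    μ • x ∈ ortho A S := fun u hu => by
  rw [CStarModule.inner_smul_right_real, hx u hu, smul_zero]

variable [StarOrderedRing A]

theorem isClosed_ortho (S : Set E) : IsClosed (ortho A S) := by
  simp only [ortho, Set.ofPred_forall]
  exact isClosed_biInter fun u _ => isClosed_eq (by fun_prop) continuous_const

theorem eq_zero_of_dense_of_inner_eq_zero {S : Set E} (hS : Dense S) {d : E}
    (h : ∀ x ∈ S, ⟪x, d⟫_A = 0) : d = 0 :=
  CStarModule.inner_self.mp <|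
    hS.induction (P := fun x => ⟪x, d⟫_A = 0) h
      (isClosed_eq (by fun_prop) continuous_const) d

theorem norm_le_norm_add_of_inner_eq_zero {x k : E} (h : ⟪k, x⟫_A = 0) :
    ‖x‖ ≤ ‖x + k‖ := by
  have h' : ⟪x, k⟫_A = 0 := by rw [← CStarModule.star_inner, h, star_zero]
  have hsq : ⟪x + k, x + k⟫_A = ⟪x, x⟫_A + ⟪k, k⟫_A := by
    simp only [CStarModule.inner_add_left, CStarModule.inner_add_right, h, h', add_zero,
      zero_add]
  refine (pow_le_pow_iff_left₀ (norm_nonneg _) (norm_nonneg _) two_ne_zero).1 ?_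
  rw [CStarModule.norm_sq_eq A, CStarModule.norm_sq_eq A, hsq]
  exact CStarAlgebra.norm_le_norm_of_nonneg_of_le CStarModule.inner_self_nonneg
    (le_add_of_nonneg_right CStarModule.inner_self_nonneg)

end Orthogonality

section ClosedRange

variable {A : Type*} [NonUnitalCStarAlgebra A] [PartialOrder A] [StarOrderedRing A]
  {E F : Type*} [NormedAddCommGroup E] [NormedSpace ℂ E] [SMul A E] [CStarModule A E]
  [CompleteSpace E] [NormedAddCommGroup F] [NormedSpace ℂ F] {t : E →ₗ.[ℂ] F}

theorem orthoComplemented_kerSet_of_exists_norm_le (hg : IsClosed (t.graph : Set (E × F)))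
    {c : ℝ} (hc : 0 < c)
    (hbdd : ∀ x : t.domain, (x : E) ∈ ortho A (kerSet t) → c * ‖(x : E)‖ ≤ ‖t x‖)
    (happrox : ∀ z : E, ∀ ε > 0,
      ∃ u y, (u, y) ∈ t.graph ∧ z - u ∈ ortho A (kerSet t) ∧ ‖y‖ ≤ ε) :
    OrthoComplemented A (kerSet t) := by
  intro z
  choose u y hgraph hperp hy using fun n : ℕ => happrox z ((1 / 2) ^ n) (by positivity)
  have hy0 : Tendsto y atTop (𝓝 0) :=
    squeeze_zero_norm hy (tendsto_pow_atTop_nhds_zero_of_lt_one (by norm_num) (by norm_num))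
  -- consecutive differences lie in `Ker(t)^⊥ ∩ Dom(t)`, where `t` is bounded below
  have hdist : ∀ n, dist (u n) (u (n + 1)) ≤ 2 / c * (1 / 2) ^ n := by
    intro n
    have hb := mul_norm_le_of_mem_graph hbdd (t.graph.sub_mem (hgraph n) (hgraph (n + 1)))
      (by simpa using sub_mem_ortho (hperp (n + 1)) (hperp n))
    have hyn : ‖y n - y (n + 1)‖ ≤ 2 * (1 / 2) ^ n := by
      calc ‖y n - y (n + 1)‖ ≤ ‖y n‖ + ‖y (n + 1)‖ := norm_sub_le _ _
        _ ≤ (1 / 2) ^ n + (1 / 2) ^ (n + 1) := add_le_add (hy n) (hy (n + 1))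
        _ ≤ 2 * (1 / 2) ^ n := by
          rw [pow_succ]; nlinarith [pow_pos (by norm_num : (0 : ℝ) < 1 / 2) n]
    rw [dist_eq_norm, div_mul_eq_mul_div, le_div_iff₀ hc, mul_comm]
    exact hb.trans hyn
  obtain ⟨v, hv⟩ := cauchySeq_tendsto_of_complete
    (cauchySeq_of_le_geometric (1 / 2) (2 / c) (by norm_num) hdist)
  have hker : v ∈ kerSet t := (mem_kerSet_iff_mem_graph t).2 <|
    hg.mem_of_tendsto (hv.prodMk_nhds hy0) (Eventually.of_forall hgraph)
  have hperp' : z - v ∈ ortho A (kerSet t) := (isClosed_ortho _).mem_of_tendsto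
    (tendsto_const_nhds.sub hv) (Eventually.of_forall hperp)
  exact ⟨v, hker, z - v, hperp', by abel⟩

variable [CompleteSpace F]

theorem exists_mul_norm_le_of_isClosed_ranSet (hg : IsClosed (t.graph : Set (E × F)))
    (hr : IsClosed (ranSet t)) :
    ∃ c : ℝ, 0 < c ∧
      ∀ x : t.domain, (x : E) ∈ ortho A (kerSet t) → c * ‖(x : E)‖ ≤ ‖t x‖ := by
  obtain ⟨C, hC, hpre⟩ := exists_preimage_norm_le_of_isClosed_ranSet t hg hr
  refine ⟨C⁻¹, inv_pos.2 hC, fun x hx => ?_⟩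
  obtain ⟨x', hx't, hx'C⟩ := hpre (t x) ⟨x, rfl⟩
  have hk : (x' : E) - x ∈ kerSet t := by
    rw [mem_kerSet_iff_mem_graph]
    simpa [hx't] using t.graph.sub_mem (t.mem_graph x') (t.mem_graph x)
  rw [inv_mul_le_iff₀ hC]
  calc ‖(x : E)‖ ≤ ‖(x : E) + ((x' : E) - x)‖ := norm_le_norm_add_of_inner_eq_zero (hx _ hk)
    _ = ‖(x' : E)‖ := by rw [add_sub_cancel]
    _ ≤ C * ‖t x‖ := hx'C

theorem isClosed_ranSet_of_orthoComplemented (hg : IsClosed (t.graph : Set (E × F)))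
    (hoc : OrthoComplemented A (kerSet t)) {c : ℝ} (hc : 0 < c)
    (hbdd : ∀ x : t.domain, (x : E) ∈ ortho A (kerSet t) → c * ‖(x : E)‖ ≤ ‖t x‖) :
    IsClosed (ranSet t) := by
  let P : Set (E × F) := {p | p ∈ t.graph ∧ p.1 ∈ ortho A (kerSet t)}
  have hP : IsClosed P := hg.inter ((isClosed_ortho _).preimage continuous_fst)
  have hdist : ∀ p ∈ P, ∀ q ∈ P, dist p q ≤ (c⁻¹ + 1) * dist p.2 q.2 := by
    rintro p ⟨hp, hp1⟩ q ⟨hq, hq1⟩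
    have hpq : ‖p.1 - q.1‖ ≤ c⁻¹ * ‖p.2 - q.2‖ := (le_inv_mul_iff₀ hc).2 <|
      mul_norm_le_of_mem_graph hbdd (t.graph.sub_mem hp hq) (sub_mem_ortho hp1 hq1)
    rw [dist_eq_norm, dist_eq_norm, norm_prod_le_iff, Prod.fst_sub, Prod.snd_sub]
    constructor <;> nlinarith [norm_nonneg (p.2 - q.2), inv_pos.2 hc]
  convert isClosed_image_of_le_mul_dist hP uniformContinuous_snd hdist using 1
  ext y
  constructor
  · rintro ⟨x, rfl⟩
    obtain ⟨k, hk, v, hv, hxkv⟩ := hoc x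
    refine ⟨(v, t x), ⟨?_, hv⟩, rfl⟩
    simpa [hxkv] using t.graph.sub_mem (t.mem_graph x) ((mem_kerSet_iff_mem_graph t).1 hk)
  · rintro ⟨⟨x, y⟩, ⟨hxy, -⟩, rfl⟩
    obtain ⟨x', -, rfl⟩ := t.mem_graph_iff.1 hxy
    exact ⟨x', rfl⟩

end ClosedRange

section Adjoint

variable {A : Type*} [NonUnitalCStarAlgebra A] [PartialOrder A]
  {E F : Type*} [NormedAddCommGroup E] [NormedSpace ℂ E] [SMul A E] [CStarModule A E]
  [NormedAddCommGroup F] [NormedSpace ℂ F] [SMul A F] [CStarModule A F]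
  {t : E →ₗ.[ℂ] F} {s : F →ₗ.[ℂ] E}

theorem IsAdjoint.inner_eq_of_mem_graph (hadj : IsAdjoint A t s) {u e : E} {y v : F}
    (hu : (u, y) ∈ t.graph) (hv : (v, e) ∈ s.graph) : ⟪y, v⟫_A = ⟪u, e⟫_A := by
  obtain ⟨x, rfl, rfl⟩ := t.mem_graph_iff.1 hu
  obtain ⟨y', rfl, rfl⟩ := s.mem_graph_iff.1 hv
  exact hadj.inner_eq x y'

theorem IsAdjoint.mem_ortho_kerSet (hadj : IsAdjoint A t s) {v : F} {e : E}
    (hv : (v, e) ∈ s.graph) : e ∈ ortho A (kerSet t) := fun k hk => by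
  rw [← hadj.inner_eq_of_mem_graph ((mem_kerSet_iff_mem_graph t).1 hk) hv,
    CStarModule.inner_zero_left]

variable [StarOrderedRing A]

theorem IsAdjoint.isClosed_graph (hadj : IsAdjoint A t s)
    (hdense : Dense (t.domain : Set E)) : IsClosed (s.graph : Set (F × E)) := by
  have hgraph : (s.graph : Set (F × E)) =
      ⋂ x : t.domain, {p | ⟪t x, p.1⟫_A = ⟪(x : E), p.2⟫_A} := by
    ext ⟨v, e⟩
    simp only [Set.mem_iInter, Set.mem_ofPred_eq, SetLike.mem_coe]
    refine ⟨fun hv x => hadj.inner_eq_of_mem_graph (t.mem_graph x) hv, fun h => ?_⟩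
    have hv : v ∈ s.domain := by rw [← SetLike.mem_coe, hadj.dom]; exact ⟨e, h⟩
    have hse : s ⟨v, hv⟩ - e = 0 := eq_zero_of_dense_of_inner_eq_zero (A := A) hdense
      fun x hx => by
        rw [CStarModule.inner_sub_right, ← hadj.inner_eq ⟨x, hx⟩ ⟨v, hv⟩, h ⟨x, hx⟩, sub_self]
    simpa [sub_eq_zero.1 hse] using s.mem_graph ⟨v, hv⟩
  rw [hgraph]
  exact isClosed_iInter fun x => isClosed_eq (by fun_prop) (by fun_prop)

theorem IsAdjoint.norm_le_of_add_smul_eq (hadj : IsAdjoint A t s) {μ : ℝ} (hμ : 0 ≤ μ)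
    {u e w : E} {y : F} (hu : (u, y) ∈ t.graph) (he : (y, e) ∈ s.graph)
    (hw : u + μ • e = w) : ‖u‖ ≤ ‖w‖ ∧ μ * ‖y‖ ^ 2 ≤ ‖w‖ ^ 2 := by
  have hinner : ⟪u, w⟫_A = ⟪u, u⟫_A + μ • ⟪y, y⟫_A := by
    rw [← hw, CStarModule.inner_add_right, CStarModule.inner_smul_right_real,
      ← hadj.inner_eq_of_mem_graph hu he]
  have hpos : 0 ≤ μ • ⟪y, y⟫_A := smul_nonneg hμ CStarModule.inner_self_nonneg
  have hcs : ‖⟪u, w⟫_A‖ ≤ ‖u‖ * ‖w‖ := CStarModule.norm_inner_le E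
  have hu2 : ‖u‖ ^ 2 ≤ ‖u‖ * ‖w‖ := by
    refine (CStarModule.norm_sq_eq A).trans_le (le_trans ?_ hcs)
    exact CStarAlgebra.norm_le_norm_of_nonneg_of_le CStarModule.inner_self_nonneg
      (hinner ▸ le_add_of_nonneg_right hpos)
  have hy2 : μ * ‖y‖ ^ 2 ≤ ‖u‖ * ‖w‖ := by
    calc μ * ‖y‖ ^ 2 = ‖μ • ⟪y, y⟫_A‖ := by
          rw [norm_smul, Real.norm_of_nonneg hμ, CStarModule.norm_sq_eq A]
      _ ≤ ‖⟪u, w⟫_A‖ := CStarAlgebra.norm_le_norm_of_nonneg_of_le hpos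
          (hinner ▸ le_add_of_nonneg_left CStarModule.inner_self_nonneg)
      _ ≤ ‖u‖ * ‖w‖ := hcs
  have huw : ‖u‖ ≤ ‖w‖ := by nlinarith [norm_nonneg u, norm_nonneg w]
  exact ⟨huw, hy2.trans (by nlinarith [norm_nonneg u, norm_nonneg w])⟩

variable [CompleteSpace E]

theorem IsAdjoint.exists_add_smul_eq (hadj : IsAdjoint A t s)
    (hsurj : ∀ v : E, ∃ u y e, (u, y) ∈ t.graph ∧ (y, e) ∈ s.graph ∧ u + e = v)
    {μ : ℝ} (hμ : 1 ≤ μ) (w : E) :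
    ∃ u y e, (u, y) ∈ t.graph ∧ (y, e) ∈ s.graph ∧ u + μ • e = w := by
  choose R Y S hRY hYS hRS using hsurj
  have hR : ∀ v v', dist (R v) (R v') ≤ dist v v' := fun v v' => by
    simpa [dist_eq_norm] using (hadj.norm_le_of_add_smul_eq (w := v - v') zero_le_one
      (t.graph.sub_mem (hRY v) (hRY v')) (s.graph.sub_mem (hYS v) (hYS v'))
      (by dsimp only; rw [one_smul, sub_add_sub_comm, hRS v, hRS v'])).1
  set κ : ℝ := 1 - μ⁻¹
  have hκ : 0 ≤ κ := sub_nonneg.2 (inv_le_one_of_one_le₀ hμ)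
  -- `u = R (μ⁻¹ • w + κ • u)` says `u + μ • t* t u = w`, and this map is a contraction
  let f : E → E := fun u => R (μ⁻¹ • w + κ • u)
  have hf : ContractingWith κ.toNNReal f := by
    refine ⟨?_, LipschitzWith.of_dist_le_mul fun u u' => (hR _ _).trans ?_⟩
    · rw [← NNReal.coe_lt_coe, Real.coe_toNNReal _ hκ]
      simpa [κ] using zero_lt_one.trans_le hμ
    · rw [Real.coe_toNNReal _ hκ, dist_eq_norm, dist_eq_norm, add_sub_add_left_eq_sub,
        ← smul_sub, norm_smul, Real.norm_of_nonneg hκ]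
  set u := ContractingWith.fixedPoint f hf
  have hu : R (μ⁻¹ • w + κ • u) = u := ContractingWith.fixedPoint_isFixedPt hf
  refine ⟨u, _, _, hu ▸ hRY _, hYS _, ?_⟩
  have he := hRS (μ⁻¹ • w + κ • u)
  rw [hu] at he
  rw [← sub_eq_of_eq_add' he.symm, smul_sub, smul_add, smul_smul, smul_smul, mul_sub,
    mul_inv_cancel₀ (by positivity), mul_one, one_smul]
  module

variable [CompleteSpace F]

theorem IsAdjoint.isClosed_range_one_add (hadj : IsAdjoint A t s)
    (htg : IsClosed (t.graph : Set (E × F))) (hsg : IsClosed (s.graph : Set (F × E))) :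
    IsClosed {w : E | ∃ u y e, (u, y) ∈ t.graph ∧ (y, e) ∈ s.graph ∧ u + e = w} := by
  let P : Set (E × F × E) := {p | (p.1, p.2.1) ∈ t.graph ∧ (p.2.1, p.2.2) ∈ s.graph}
  have hP : IsClosed P := (htg.preimage (by fun_prop)).inter (hsg.preimage (by fun_prop))
  have hdist : ∀ p ∈ P, ∀ q ∈ P, dist p q ≤ 2 * dist (p.1 + p.2.2) (q.1 + q.2.2) := by
    rintro ⟨u, y, e⟩ ⟨hu, he⟩ ⟨u', y', e'⟩ ⟨hu', he'⟩
    obtain ⟨hle, hy⟩ := hadj.norm_le_of_add_smul_eq zero_le_one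
      (t.graph.sub_mem hu hu') (s.graph.sub_mem he he') rfl
    simp only [one_smul, one_mul] at hle hy
    rw [pow_le_pow_iff_left₀ (norm_nonneg _) (norm_nonneg _) two_ne_zero] at hy
    have he : ‖e - e'‖ ≤ ‖u - u' + (e - e')‖ + ‖u - u'‖ := by
      simpa using norm_sub_le (u - u' + (e - e')) (u - u')
    simp only [dist_eq_norm, Prod.mk_sub_mk, norm_prod_le_iff, add_sub_add_comm]
    have := norm_nonneg (u - u' + (e - e'))
    refine ⟨?_, ?_, ?_⟩ <;> linarith
  convert isClosed_image_of_le_mul_dist hP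
    ((uniformContinuous_fst.add (uniformContinuous_snd.comp uniformContinuous_snd))) hdist
    using 1
  ext w
  constructor
  · rintro ⟨u, y, e, hu, he, rfl⟩
    exact ⟨(u, y, e), ⟨hu, he⟩, rfl⟩
  · rintro ⟨⟨u, y, e⟩, ⟨hu, he⟩, rfl⟩
    exact ⟨u, y, e, hu, he, rfl⟩

theorem IsRegular.exists_add_eq (ht : IsRegular A t s) (w : E) :
    ∃ u y e, (u, y) ∈ t.graph ∧ (y, e) ∈ s.graph ∧ u + e = w := by
  have hsub : onePlusRange t s ⊆
      {w : E | ∃ u y e, (u, y) ∈ t.graph ∧ (y, e) ∈ s.graph ∧ u + e = w} := by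
    rintro _ ⟨x, hx, rfl⟩
    exact ⟨x, t x, s ⟨t x, hx⟩, t.mem_graph x, s.mem_graph ⟨t x, hx⟩, rfl⟩
  have hclosed :=
    ht.adj.isClosed_range_one_add ht.closedGraph (ht.adj.isClosed_graph ht.denseDom)
  exact hclosed.closure_subset_iff.2 hsub (ht.denseOnePlusRange w)

theorem IsRegular.exists_sub_mem_ortho_kerSet_norm_le (ht : IsRegular A t s) (z : E) {ε : ℝ}
    (hε : 0 < ε) :
    ∃ u y, (u, y) ∈ t.graph ∧ z - u ∈ ortho A (kerSet t) ∧ ‖y‖ ≤ ε := by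
  set a := ‖z‖ / ε
  obtain ⟨u, y, e, hu, he, hw⟩ :=
    ht.adj.exists_add_smul_eq ht.exists_add_eq (le_add_of_nonneg_right (sq_nonneg a)) z
  refine ⟨u, y, hu, ?_, ?_⟩
  · rw [← hw, add_sub_cancel_left]
    exact smul_mem_ortho _ (ht.adj.mem_ortho_kerSet he)
  · have hy := (ht.adj.norm_le_of_add_smul_eq (by positivity) hu he hw).2
    have hz : ‖z‖ = a * ε := (div_mul_cancel₀ _ hε.ne').symm
    rw [hz] at hy
    by_contra! h
    have h2 : ε ^ 2 < ‖y‖ ^ 2 := pow_lt_pow_left₀ h hε.le two_ne_zero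
    nlinarith [mul_lt_mul_of_pos_left h2 (by positivity : (0 : ℝ) < 1 + a ^ 2)]

theorem IsRegular.orthoComplemented_kerSet (ht : IsRegular A t s) {c : ℝ} (hc : 0 < c)
    (hbdd : ∀ x : t.domain, (x : E) ∈ ortho A (kerSet t) → c * ‖(x : E)‖ ≤ ‖t x‖) :
    OrthoComplemented A (kerSet t) :=
  orthoComplemented_kerSet_of_exists_norm_le ht.closedGraph hc hbdd
    fun z _ hε => ht.exists_sub_mem_ortho_kerSet_norm_le z hε

end Adjoint

end RegularOperators

/-- a regular operator `t` has closed range iff `Ker(t)` is orthogonally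
complemented in `E` and `t` is bounded below on `Ker(t)^⊥ ∩ Dom(t)`. -/
theorem ranSet_isClosed_iff_orthoComplemented_and_boundedBelow
    (t : E →ₗ.[ℂ] F) (s : F →ₗ.[ℂ] E) (ht : IsRegular A t s) :
    IsClosed (ranSet t) ↔
      (OrthoComplemented A (kerSet t) ∧
        ∃ c : ℝ, 0 < c ∧ ∀ x : t.domain, (x : E) ∈ ortho A (kerSet t) →
          c * ‖(x : E)‖ ≤ ‖t x‖) := by
  let : NormedSpace ℂ E := .ofCore (CStarModule.normedSpaceCore A)
  let : NormedSpace ℂ F := .ofCore (CStarModule.normedSpaceCore A)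
  constructor
  · intro hr
    obtain ⟨c, hc, hbdd⟩ := exists_mul_norm_le_of_isClosed_ranSet (A := A) ht.closedGraph hr
    exact ⟨ht.orthoComplemented_kerSet hc hbdd, c, hc, hbdd⟩
  · rintro ⟨hoc, c, hc, hbdd⟩
    exact isClosed_ranSet_of_orthoComplemented ht.closedGraph hoc hc hbdd
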